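/- (Concentration of the norm.) Let X = (X₁, …, X_m) be a random vector in ℝᵐ with independent coordinates satisfying E[X_i²] = 1 and ‖X_i‖_{ψ₂} ≤ K for some K ≥ 1. Then there is an absolute constant C > 0 such that ‖ ‖X‖₂ − √m ‖_{ψ₂} ≤ C·K². -/

import Mathlib

open MeasureTheory ProbabilityTheory

noncomputable section

/-- Euclidean (ℓ²) norm of a vector in ℝⁿ. -/
def l2norm {n : ℕ} (v : Fin n → ℝ) : ℝ := Real.sqrt (∑ i, (v i) ^ 2)

/-- Matrix-vector product. -/
def matVec {m n : ℕ} (A : Fin m → Fin n → ℝ) (x : Fin n → ℝ) : Fin m → ℝ :=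
  fun i => ∑ j, A i j * x j

/-- The sub-gaussian (ψ₂) norm of a real random variable:
`inf {K > 0 : E exp(Z²/K²) ≤ 2}`. -/
def psi2Norm {Ω : Type*} [MeasurableSpace Ω] (μ : Measure Ω) (Z : Ω → ℝ) : ℝ :=
  sInf {K : ℝ | 0 < K ∧ ∫ ω, Real.exp (Z ω ^ 2 / K ^ 2) ∂μ ≤ 2}

/-- The standard gaussian measure on ℝⁿ, i.e. the law of g ∼ N(0, Iₙ). -/
def stdGaussian (n : ℕ) : Measure (Fin n → ℝ) :=
  Measure.pi fun _ => gaussianReal 0 1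

/-- Gaussian complexity γ(T) = E sup_{x ∈ T} |⟨g, x⟩|. -/
def gaussianComplexity {n : ℕ} (T : Set (Fin n → ℝ)) : ℝ :=
  ∫ g, (⨆ x : T, |∑ j, g j * (x : Fin n → ℝ) j|) ∂stdGaussian n

/-- Gaussian width w(T) = E sup_{x ∈ T} ⟨g, x⟩. -/
def gaussianWidth {n : ℕ} (T : Set (Fin n → ℝ)) : ℝ :=
  ∫ g, (⨆ x : T, ∑ j, g j * (x : Fin n → ℝ) j) ∂stdGaussian n

/-- Radius rad(T) = sup_{x ∈ T} ‖x‖₂. -/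
def radius {n : ℕ} (T : Set (Fin n → ℝ)) : ℝ := ⨆ x : T, l2norm (x : Fin n → ℝ)

/-- An m × n random matrix `A` (with rows `A ω i`) is isotropic and sub-gaussian with
parameter `K`: its rows are independent random vectors, each row is isotropic
(`E Aᵢ Aᵢᵀ = Iₙ`), and each row has sub-gaussian norm at most `K`. -/
structure IsIsotropicSubGaussian {Ω : Type*} [MeasurableSpace Ω] (μ : Measure Ω)
    {m n : ℕ} (A : Ω → Fin m → Fin n → ℝ) (K : ℝ) : Prop where
  measurable : Measurable A
  indep : iIndepFun (fun i ω => A ω i) μ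
  isotropic : ∀ i j k, ∫ ω, A ω i j * A ω i k ∂μ = if j = k then 1 else 0
  subgaussian : ∀ i (θ : Fin n → ℝ), l2norm θ = 1 →
    psi2Norm μ (fun ω => ∑ j, A ω i j * θ j) ≤ K

/-!
Write `‖X‖² - m = ∑ᵢ (Xᵢ² - 1)` and fix `L = 2K`, so that `E exp (Xᵢ²/L²) ≤ 2`.
The pointwise bound `exp x ≤ 1 + x + x² exp |x|` turns this into the moment generating
function bound `E exp (l (Xᵢ² - 1)/L²) ≤ exp (44 l²)` for `|l| ≤ 1/2`; by independence the
normalised sum has m.g.f. at most `exp (44 m l²)`, and Chernoff's bound with the optimal `l`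
gives a Bernstein tail `2 exp (-min (a²/(176 m), a/4))` at level `a`.
Since `|‖X‖ - √m| ≥ u` forces `|‖X‖² - m| ≥ u · max u √m`, both regimes of that tail are
sub-gaussian in `u`: `P(|‖X‖ - √m| ≥ u) ≤ 2 exp (-u²/(14 L²)²)`. The layer-cake formula turns
such a tail into `E exp ((‖X‖ - √m)²/(28 L²)²) ≤ 2`, i.e. a `ψ₂` bound `28 L² = 112 K²`.
-/

open Real Set Filter Topology

theorem exp_le_one_add_add_sq_mul_exp_abs (x : ℝ) : exp x ≤ 1 + x + x ^ 2 * exp |x| := by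
  have hexp : 1 ≤ exp |x| := one_le_exp (abs_nonneg x)
  rcases le_total |x| 1 with hx | hx
  · have h := (abs_le.1 (Real.norm_exp_sub_one_sub_id_le hx)).2
    rw [Real.norm_eq_abs, sq_abs] at h
    nlinarith [sq_nonneg x]
  · rcases le_total 0 x with hx0 | hx0
    · rw [abs_of_nonneg hx0] at hx ⊢
      nlinarith [mul_nonneg (by nlinarith : (0:ℝ) ≤ x ^ 2 - 1) (exp_pos x).le]
    · have : exp x ≤ 1 := exp_le_one_iff.2 hx0
      nlinarith [abs_of_nonpos hx0]

theorem exp_mul_le_of_abs_le {l w u : ℝ} (hl : |l| ≤ 1 / 2) (hu : 0 ≤ u)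
    (hw : |w| ≤ u + 1) :
    exp (l * w) ≤ 1 + l * w + 22 * l ^ 2 * exp u := by
  have hlw : |l * w| ≤ (u + 1) / 2 := by
    rw [abs_mul]; nlinarith [abs_nonneg l, abs_nonneg w]
  have hsq : (u + 1) ^ 2 ≤ 8 * exp ((u + 1) / 2) := by
    nlinarith [quadratic_le_exp_of_nonneg (x := (u + 1) / 2) (by linarith)]
  have he : exp 1 ≤ 11 / 4 := by linarith [exp_one_lt_d9]
  calc exp (l * w) ≤ 1 + l * w + (l * w) ^ 2 * exp |l * w| := exp_le_one_add_add_sq_mul_exp_abs _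
    _ ≤ 1 + l * w + (l ^ 2 * (u + 1) ^ 2) * exp ((u + 1) / 2) := by
      gcongr
      rw [mul_pow, ← sq_abs w]
      gcongr
    _ ≤ 1 + l * w + l ^ 2 * (8 * exp ((u + 1) / 2)) * exp ((u + 1) / 2) := by gcongr
    _ = 1 + l * w + 8 * l ^ 2 * exp 1 * exp u := by
      have h : exp ((u + 1) / 2) * exp ((u + 1) / 2) = exp 1 * exp u := by
        rw [← exp_add, ← exp_add]; ring_nf
      linear_combination 8 * l ^ 2 * h
    _ ≤ 1 + l * w + 22 * l ^ 2 * exp u := by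
      have : 0 ≤ l ^ 2 * exp u := by positivity
      nlinarith

theorem mul_max_le_abs_sq_sub_sq {x b u : ℝ} (hx : 0 ≤ x) (hb : 0 ≤ b) (h : u ≤ |x - b|) :
    u * max u b ≤ |x ^ 2 - b ^ 2| := by
  rcases le_total u 0 with hu | hu
  · exact (mul_nonpos_of_nonpos_of_nonneg hu (hb.trans (le_max_right u b))).trans (abs_nonneg _)
  rw [sq_sub_sq, abs_mul, abs_of_nonneg (by linarith : 0 ≤ x + b), mul_comm]
  gcongr
  rcases le_total b x with hbx | hxb
  · exact max_le (by rw [abs_of_nonneg (by linarith)] at h; linarith) (by linarith)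
  · rw [abs_of_nonpos (by linarith)] at h
    exact max_le (by linarith) (by linarith)

@[fun_prop]
theorem measurable_l2norm {n : ℕ} : Measurable (l2norm : (Fin n → ℝ) → ℝ) := by
  unfold l2norm
  fun_prop

theorem l2norm_nonneg {n : ℕ} (v : Fin n → ℝ) : 0 ≤ l2norm v := sqrt_nonneg _

theorem l2norm_sq {n : ℕ} (v : Fin n → ℝ) : l2norm v ^ 2 = ∑ i, v i ^ 2 :=
  sq_sqrt (Finset.sum_nonneg fun _ _ => sq_nonneg _)

theorem sq_apply_le_two_mul_sq_l2norm_sub_sqrt_add {n : ℕ} (v : Fin n → ℝ) (i : Fin n) :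
    v i ^ 2 ≤ 2 * (l2norm v - √n) ^ 2 + 2 * n :=
  calc v i ^ 2 ≤ l2norm v ^ 2 := by
        rw [l2norm_sq]
        exact Finset.single_le_sum (fun j _ => sq_nonneg (v j)) (Finset.mem_univ i)
    _ = ((l2norm v - √n) + √n) ^ 2 := by ring
    _ ≤ 2 * ((l2norm v - √n) ^ 2 + √n ^ 2) := add_sq_le
    _ = 2 * (l2norm v - √n) ^ 2 + 2 * n := by rw [sq_sqrt (Nat.cast_nonneg n)]; ring

theorem integral_Ioi_add_rpow_of_lt {a c m : ℝ} (ha : a < -1) (hc : -m < c) :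
    ∫ x in Ioi c, (x + m) ^ a = -(c + m) ^ (a + 1) / (a + 1) := by
  have ha1 : a + 1 ≠ 0 := by linarith
  have hderiv : ∀ x ∈ Ici c,
      HasDerivAt (fun t => (t + m) ^ (a + 1) / (a + 1)) ((x + m) ^ a) x := by
    intro x hx
    have hxm : 0 < x + m := by linarith [mem_Ici.1 hx]
    have h := (((hasDerivAt_id' x).add_const m).rpow_const (p := a + 1) (Or.inl hxm.ne')).div_const
      (a + 1)
    rw [add_sub_cancel_right, one_mul, mul_div_cancel_left₀ _ ha1] at h
    exact h
  have hlim : Tendsto (fun t => (t + m) ^ (a + 1) / (a + 1)) atTop (𝓝 0) := by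
    have h := ((tendsto_rpow_neg_atTop (y := -(a + 1)) (by linarith)).comp
      (tendsto_atTop_add_const_right _ m tendsto_id)).div_const (a + 1)
    simpa using h
  rw [integral_Ioi_of_hasDerivAt_of_tendsto' hderiv (integrableOn_add_rpow_Ioi_of_lt ha hc) hlim]
  ring

section Psi2Norm

variable {Ω : Type*} [MeasurableSpace Ω] {μ : Measure Ω} {Z : Ω → ℝ}

theorem psi2Norm_nonneg : 0 ≤ psi2Norm μ Z :=
  Real.sInf_nonneg fun _ ht => ht.1.le

theorem psi2Norm_le_of_integral_le {t : ℝ} (ht : 0 < t)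
    (h : ∫ ω, exp (Z ω ^ 2 / t ^ 2) ∂μ ≤ 2) : psi2Norm μ Z ≤ t :=
  csInf_le ⟨0, fun _ hs => hs.1.le⟩ ⟨ht, h⟩

theorem integrable_exp_sq_div_sq_of_le (hZ : AEMeasurable Z μ) {s t : ℝ} (hs : 0 < s)
    (hst : s ≤ t) (h : Integrable (fun ω => exp (Z ω ^ 2 / s ^ 2)) μ) :
    Integrable (fun ω => exp (Z ω ^ 2 / t ^ 2)) μ := by
  refine h.mono' (by fun_prop) (ae_of_all _ fun ω => ?_)
  rw [Real.norm_of_nonneg (exp_pos _).le]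
  gcongr

theorem integrable_exp_sq_div_sq_of_sq_le [IsFiniteMeasure μ] {Y : Ω → ℝ}
    (hY : AEMeasurable Y μ) {c : ℝ} (hYZ : ∀ ω, Y ω ^ 2 ≤ 2 * Z ω ^ 2 + c)
    (hZ : ∀ t > 0, Integrable (fun ω => exp (Z ω ^ 2 / t ^ 2)) μ) {t : ℝ} (ht : 0 < t) :
    Integrable (fun ω => exp (Y ω ^ 2 / t ^ 2)) μ := by
  have hdom := (hZ (t / √2) (by positivity)).const_mul (exp (c / t ^ 2))
  refine hdom.mono' (by fun_prop) (ae_of_all _ fun ω => ?_)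
  rw [Real.norm_of_nonneg (exp_pos _).le, ← exp_add, div_pow, sq_sqrt zero_le_two]
  gcongr
  calc Y ω ^ 2 / t ^ 2 ≤ (2 * Z ω ^ 2 + c) / t ^ 2 := by gcongr; exact hYZ ω
    _ = c / t ^ 2 + Z ω ^ 2 / (t ^ 2 / 2) := by field_simp; ring

/-- Once `exp (Z²/t²)` fails to be integrable, so does `exp (Z²/s²)` for every `s ≤ t`; the
integral in `psi2Norm` then takes the junk value `0`, so all these `s` are admissible. -/
theorem psi2Norm_eq_zero_of_not_integrable (hZ : AEMeasurable Z μ) {t : ℝ} (ht : 0 < t)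
    (h : ¬ Integrable (fun ω => exp (Z ω ^ 2 / t ^ 2)) μ) : psi2Norm μ Z = 0 := by
  refine le_antisymm (le_of_forall_pos_le_add fun ε hε => ?_) psi2Norm_nonneg
  have hs : 0 < min ε t := lt_min hε ht
  have hnot : ¬ Integrable (fun ω => exp (Z ω ^ 2 / min ε t ^ 2)) μ :=
    fun hint => h (integrable_exp_sq_div_sq_of_le hZ hs (min_le_right ε t) hint)
  calc psi2Norm μ Z ≤ min ε t :=
        psi2Norm_le_of_integral_le hs (by rw [integral_undef hnot]; norm_num)
    _ ≤ 0 + ε := by simp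

theorem tendsto_integral_exp_sq_div_sq_atTop [IsProbabilityMeasure μ] (hZ : AEMeasurable Z μ)
    {t₀ : ℝ} (ht₀ : 0 < t₀) (h : Integrable (fun ω => exp (Z ω ^ 2 / t₀ ^ 2)) μ) :
    Tendsto (fun t => ∫ ω, exp (Z ω ^ 2 / t ^ 2) ∂μ) atTop (𝓝 1) := by
  have hmeas : ∀ᶠ t in atTop, AEStronglyMeasurable (fun ω => exp (Z ω ^ 2 / t ^ 2)) μ :=
    Eventually.of_forall fun t => by fun_prop
  have hbound : ∀ᶠ t in atTop, ∀ᵐ ω ∂μ,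
      ‖exp (Z ω ^ 2 / t ^ 2)‖ ≤ exp (Z ω ^ 2 / t₀ ^ 2) := by
    filter_upwards [eventually_ge_atTop t₀] with t ht
    refine ae_of_all _ fun ω => ?_
    rw [Real.norm_of_nonneg (exp_pos _).le]
    gcongr
  have hpointwise : ∀ᵐ ω ∂μ, Tendsto (fun t => exp (Z ω ^ 2 / t ^ 2)) atTop (𝓝 1) := by
    refine ae_of_all _ fun ω => ?_
    have h0 : Tendsto (fun t : ℝ => Z ω ^ 2 / t ^ 2) atTop (𝓝 0) :=
      tendsto_const_nhds.div_atTop (tendsto_pow_atTop two_ne_zero)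
    simpa [Function.comp_def] using (continuous_exp.tendsto 0).comp h0
  simpa using tendsto_integral_filter_of_dominated_convergence _ hmeas hbound h hpointwise

theorem integral_exp_sq_div_sq_le_two_of_psi2Norm_lt [IsProbabilityMeasure μ]
    (hZ : AEMeasurable Z μ) (hint : ∀ t > 0, Integrable (fun ω => exp (Z ω ^ 2 / t ^ 2)) μ)
    {L : ℝ} (hL : psi2Norm μ Z < L) : ∫ ω, exp (Z ω ^ 2 / L ^ 2) ∂μ ≤ 2 := by
  have hL0 : 0 < L := psi2Norm_nonneg.trans_lt hL
  have hne : {t : ℝ | 0 < t ∧ ∫ ω, exp (Z ω ^ 2 / t ^ 2) ∂μ ≤ 2}.Nonempty := by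
    obtain ⟨t, hlt, ht⟩ := (((tendsto_integral_exp_sq_div_sq_atTop hZ hL0
      (hint L hL0)).eventually (gt_mem_nhds one_lt_two)).and (eventually_gt_atTop 0)).exists
    exact ⟨t, ht, hlt.le⟩
  obtain ⟨s, ⟨hs, hs2⟩, hsL⟩ := (csInf_lt_iff ⟨0, fun _ h => h.1.le⟩ hne).1 hL
  refine le_trans (integral_mono (hint L hL0) (hint s hs) fun ω => ?_) hs2
  dsimp only
  gcongr

theorem measure_lt_exp_sq_div_sq_sub_one_le [IsFiniteMeasure μ] {σ : ℝ} (hσ : 0 < σ)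
    (htail : ∀ u > 0, μ.real {ω | u ≤ |Z ω|} ≤ 2 * exp (-(u ^ 2 / σ ^ 2))) {s : ℝ} (hs : 0 < s) :
    μ {ω | s < exp (Z ω ^ 2 / (2 * σ) ^ 2) - 1} ≤ ENNReal.ofReal (2 * (s + 1) ^ (-4 : ℝ)) := by
  have hlog := log_pos (by linarith : 1 < s + 1)
  set u := 2 * σ * √(log (s + 1)) with hu_def
  have hu : 0 < u := by positivity
  have hu2 : u ^ 2 = (2 * σ) ^ 2 * log (s + 1) := by rw [hu_def, mul_pow, sq_sqrt hlog.le]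
  have hsub : {ω | s < exp (Z ω ^ 2 / (2 * σ) ^ 2) - 1} ⊆ {ω | u ≤ |Z ω|} := by
    intro ω (hω : s < exp (Z ω ^ 2 / (2 * σ) ^ 2) - 1)
    have hlt : log (s + 1) < Z ω ^ 2 / (2 * σ) ^ 2 := by
      rw [log_lt_iff_lt_exp (by linarith)]
      linarith
    rw [lt_div_iff₀ (by positivity)] at hlt
    exact (sq_le_sq₀ hu.le (abs_nonneg _)).1 (by rw [sq_abs]; linarith)
  have hexp : exp (-(u ^ 2 / σ ^ 2)) = (s + 1) ^ (-4 : ℝ) := by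
    rw [rpow_def_of_pos (by linarith), hu2]
    congr 1
    field_simp
    ring
  calc μ {ω | s < exp (Z ω ^ 2 / (2 * σ) ^ 2) - 1} ≤ μ {ω | u ≤ |Z ω|} := measure_mono hsub
    _ = ENNReal.ofReal (μ.real {ω | u ≤ |Z ω|}) := (ofReal_measureReal).symm
    _ ≤ _ := ENNReal.ofReal_le_ofReal ((htail u hu).trans_eq (by rw [hexp]))

theorem psi2Norm_le_of_tail [IsProbabilityMeasure μ] (hZ : AEMeasurable Z μ) {σ : ℝ}
    (hσ : 0 < σ)
    (htail : ∀ u > 0, μ.real {ω | u ≤ |Z ω|} ≤ 2 * exp (-(u ^ 2 / σ ^ 2))) :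
    psi2Norm μ Z ≤ 2 * σ := by
  set f : Ω → ℝ := fun ω => exp (Z ω ^ 2 / (2 * σ) ^ 2) - 1 with hf_def
  have hf_nn : ∀ ω, 0 ≤ f ω := fun ω => sub_nonneg.2 (one_le_exp (by positivity))
  have hf : AEMeasurable f μ := by fun_prop
  have hlin : ∫⁻ ω, ENNReal.ofReal (f ω) ∂μ ≤ ENNReal.ofReal (2 / 3) := by
    have hint : IntegrableOn (fun s : ℝ => 2 * (s + 1) ^ (-4 : ℝ)) (Ioi 0) :=
      (integrableOn_add_rpow_Ioi_of_lt (by norm_num) (by norm_num)).const_mul 2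
    have hnn : 0 ≤ᵐ[volume.restrict (Ioi 0)] fun s : ℝ => 2 * (s + 1) ^ (-4 : ℝ) := by
      filter_upwards [ae_restrict_mem measurableSet_Ioi] with s hs
      have : 0 ≤ s + 1 := by linarith [mem_Ioi.1 hs]
      positivity
    rw [lintegral_eq_lintegral_meas_lt μ (ae_of_all _ hf_nn) hf]
    calc ∫⁻ s in Ioi 0, μ {ω | s < f ω}
        ≤ ∫⁻ s in Ioi 0, ENNReal.ofReal (2 * (s + 1) ^ (-4 : ℝ)) :=
          setLIntegral_mono' measurableSet_Ioi fun s hs =>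
            measure_lt_exp_sq_div_sq_sub_one_le hσ htail hs
      _ = ENNReal.ofReal (∫ s in Ioi 0, 2 * (s + 1) ^ (-4 : ℝ)) :=
          (ofReal_integral_eq_lintegral_ofReal hint hnn).symm
      _ = ENNReal.ofReal (2 / 3) := by
          rw [integral_const_mul, integral_Ioi_add_rpow_of_lt (by norm_num) (by norm_num)]
          norm_num
  have hf_int : Integrable f μ := ⟨hf.aestronglyMeasurable,
    (hasFiniteIntegral_iff_ofReal (ae_of_all _ hf_nn)).2 (hlin.trans_lt ENNReal.ofReal_lt_top)⟩
  have hf_le : ∫ ω, f ω ∂μ ≤ 2 / 3 := by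
    rw [integral_eq_lintegral_of_nonneg_ae (ae_of_all _ hf_nn) hf.aestronglyMeasurable]
    exact ENNReal.toReal_le_of_le_ofReal (by norm_num) hlin
  refine psi2Norm_le_of_integral_le (by positivity) ?_
  have hexp_int : Integrable (fun ω => exp (Z ω ^ 2 / (2 * σ) ^ 2)) μ := by
    refine (hf_int.add (integrable_const (1 : ℝ))).congr (ae_of_all _ fun ω => ?_)
    simp [hf_def]
  have hf_eq : ∫ ω, f ω ∂μ = ∫ ω, exp (Z ω ^ 2 / (2 * σ) ^ 2) ∂μ - 1 := by
    rw [hf_def, integral_sub hexp_int (integrable_const 1)]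
    simp
  linarith

end Psi2Norm

def bernsteinExponent (v a : ℝ) : ℝ := min (a ^ 2 / (4 * v)) (a / 4)

section Bernstein

variable {Ω : Type*} [MeasurableSpace Ω] {μ : Measure Ω} [IsFiniteMeasure μ] {T : Ω → ℝ}
  {v : ℝ}

theorem measureReal_ge_le_exp_neg_min (hv : 0 < v)
    (hint : ∀ l, |l| ≤ 1 / 2 → Integrable (fun ω => exp (l * T ω)) μ)
    (hmgf : ∀ l, |l| ≤ 1 / 2 → mgf T μ l ≤ exp (v * l ^ 2)) {a : ℝ} (ha : 0 ≤ a) :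
    μ.real {ω | a ≤ T ω} ≤ exp (-bernsteinExponent v a) := by
  set l := min (a / (2 * v)) (1 / 2) with hl_def
  have hl0 : 0 ≤ l := le_min (by positivity) (by norm_num)
  have hl : |l| ≤ 1 / 2 := by rw [abs_of_nonneg hl0]; exact min_le_right _ _
  have hexponent : v * l ^ 2 - l * a ≤ -bernsteinExponent v a := by
    rcases le_total (a / (2 * v)) (1 / 2) with h | h
    · rw [hl_def, min_eq_left h]
      have : v * (a / (2 * v)) ^ 2 - a / (2 * v) * a = -(a ^ 2 / (4 * v)) := by
        field_simp; ring
      rw [this, neg_le_neg_iff]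
      exact min_le_left _ _
    · rw [hl_def, min_eq_right h]
      have hva : v ≤ a := by rw [le_div_iff₀ (by positivity)] at h; linarith
      linarith [show bernsteinExponent v a ≤ a / 4 from min_le_right _ _]
  calc μ.real {ω | a ≤ T ω} ≤ exp (-l * a) * mgf T μ l :=
        measure_ge_le_exp_mul_mgf a hl0 (hint l hl)
    _ ≤ exp (-l * a) * exp (v * l ^ 2) := by gcongr; exact hmgf l hl
    _ = exp (v * l ^ 2 - l * a) := by rw [← exp_add]; ring_nf
    _ ≤ exp (-bernsteinExponent v a) := exp_le_exp.2 hexponent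

theorem measureReal_abs_ge_le_two_mul_exp_neg_min (hv : 0 < v)
    (hint : ∀ l, |l| ≤ 1 / 2 → Integrable (fun ω => exp (l * T ω)) μ)
    (hmgf : ∀ l, |l| ≤ 1 / 2 → mgf T μ l ≤ exp (v * l ^ 2)) {a : ℝ} (ha : 0 ≤ a) :
    μ.real {ω | a ≤ |T ω|} ≤ 2 * exp (-bernsteinExponent v a) := by
  have hneg : μ.real {ω | a ≤ (-T) ω} ≤ exp (-bernsteinExponent v a) := by
    refine measureReal_ge_le_exp_neg_min hv (fun l hl => ?_) (fun l hl => ?_) ha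
    · simpa using hint (-l) (by rwa [abs_neg])
    · simpa [mgf_neg] using hmgf (-l) (by rwa [abs_neg])
  calc μ.real {ω | a ≤ |T ω|} ≤ μ.real ({ω | a ≤ T ω} ∪ {ω | a ≤ (-T) ω}) :=
        measureReal_mono fun ω (hω : a ≤ |T ω|) => le_abs.1 hω
    _ ≤ μ.real {ω | a ≤ T ω} + μ.real {ω | a ≤ (-T) ω} := measureReal_union_le _ _
    _ ≤ 2 * exp (-bernsteinExponent v a) := by
      linarith [measureReal_ge_le_exp_neg_min hv hint hmgf ha]

end Bernstein

theorem sq_div_le_bernsteinExponent {u L m : ℝ} (hu : 0 < u) (hL : 1 ≤ L) (hm : 0 < m) :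
    u ^ 2 / (14 * L ^ 2) ^ 2 ≤ bernsteinExponent (44 * m) (u * max u √m / L ^ 2) := by
  set M := max u √m
  set a := u * M / L ^ 2
  have hL2 : 1 ≤ L ^ 2 := one_le_pow₀ hL
  have haL : a * L ^ 2 = u * M := div_mul_cancel₀ _ (by positivity)
  have hMm : m ≤ M ^ 2 := by
    simpa [sq_sqrt hm.le] using pow_le_pow_left₀ (sqrt_nonneg _) (le_max_right u √m) 2
  have huM : u ≤ M := le_max_left _ _
  have ha2 : a ^ 2 * (14 * L ^ 2) ^ 2 = 196 * (u * M) ^ 2 := by rw [← haL]; ring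
  have ha1 : a * (14 * L ^ 2) ^ 2 = 196 * L ^ 2 * (u * M) := by rw [← haL]; ring
  refine le_min ?_ ?_ <;> rw [div_le_div_iff₀ (by positivity) (by positivity)]
  · nlinarith [mul_le_mul_of_nonneg_left hMm (sq_nonneg u)]
  · nlinarith [mul_le_mul_of_nonneg_left huM hu.le]

theorem exp_mul_sq_sub_one_div_sq_le {l L : ℝ} (y : ℝ) (hl : |l| ≤ 1 / 2) (hL : 1 ≤ L) :
    exp (l * ((y ^ 2 - 1) / L ^ 2)) ≤
      1 + l * ((y ^ 2 - 1) / L ^ 2) + 22 * l ^ 2 * exp (y ^ 2 / L ^ 2) := by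
  have hL2 : 1 / L ^ 2 ≤ 1 := div_le_one_of_le₀ (one_le_pow₀ hL) (by positivity)
  have hy : 0 ≤ y ^ 2 / L ^ 2 := by positivity
  have hinv : 0 ≤ 1 / L ^ 2 := by positivity
  refine exp_mul_le_of_abs_le hl hy (abs_le.2 ⟨?_, ?_⟩) <;> rw [sub_div] <;> linarith

section SquaredCoordinate

variable {Ω : Type*} [MeasurableSpace Ω] {μ : Measure Ω} [IsProbabilityMeasure μ]
  {Y : Ω → ℝ} {L l : ℝ}

theorem integrable_exp_mul_sq_sub_one_div_sq (hY : AEMeasurable Y μ) (hL : 1 ≤ L)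
    (hint : Integrable (fun ω => exp (Y ω ^ 2 / L ^ 2)) μ) (hvar : ∫ ω, Y ω ^ 2 ∂μ = 1)
    (hl : |l| ≤ 1 / 2) :
    Integrable (fun ω => exp (l * ((Y ω ^ 2 - 1) / L ^ 2))) μ := by
  have hY2 : Integrable (fun ω => Y ω ^ 2) μ := .of_integral_ne_zero (by simp [hvar])
  have hdom : Integrable
      (fun ω => 1 + l * ((Y ω ^ 2 - 1) / L ^ 2) + 22 * l ^ 2 * exp (Y ω ^ 2 / L ^ 2)) μ := by
    fun_prop
  refine hdom.mono' (by fun_prop) (ae_of_all _ fun ω => ?_)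
  rw [Real.norm_of_nonneg (exp_pos _).le]
  exact exp_mul_sq_sub_one_div_sq_le (Y ω) hl hL

theorem mgf_sq_sub_one_div_sq_le (hY : AEMeasurable Y μ) (hL : 1 ≤ L)
    (hint : Integrable (fun ω => exp (Y ω ^ 2 / L ^ 2)) μ)
    (hexp : ∫ ω, exp (Y ω ^ 2 / L ^ 2) ∂μ ≤ 2) (hvar : ∫ ω, Y ω ^ 2 ∂μ = 1)
    (hl : |l| ≤ 1 / 2) :
    mgf (fun ω => (Y ω ^ 2 - 1) / L ^ 2) μ l ≤ exp (44 * l ^ 2) := by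
  have hY2 : Integrable (fun ω => Y ω ^ 2) μ := .of_integral_ne_zero (by simp [hvar])
  have hmean : ∫ ω, (Y ω ^ 2 - 1) / L ^ 2 ∂μ = 0 := by
    rw [integral_div, integral_sub hY2 (integrable_const 1), hvar]
    simp
  calc mgf (fun ω => (Y ω ^ 2 - 1) / L ^ 2) μ l
      ≤ ∫ ω, (1 + l * ((Y ω ^ 2 - 1) / L ^ 2) + 22 * l ^ 2 * exp (Y ω ^ 2 / L ^ 2)) ∂μ :=
        integral_mono (integrable_exp_mul_sq_sub_one_div_sq hY hL hint hvar hl) (by fun_prop)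
          fun ω => exp_mul_sq_sub_one_div_sq_le (Y ω) hl hL
    _ = 1 + 22 * l ^ 2 * ∫ ω, exp (Y ω ^ 2 / L ^ 2) ∂μ := by
        rw [integral_add (by fun_prop) (by fun_prop), integral_add (by fun_prop) (by fun_prop),
          integral_const_mul, integral_const_mul, hmean]
        simp
    _ ≤ 1 + 44 * l ^ 2 := by nlinarith [sq_nonneg l]
    _ ≤ exp (44 * l ^ 2) := by linarith [add_one_le_exp (44 * l ^ 2)]

end SquaredCoordinate

section IndependentCoordinates

variable {Ω : Type*} [MeasurableSpace Ω] {μ : Measure Ω} [IsProbabilityMeasure μ] {m : ℕ}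
  {X : Ω → Fin m → ℝ} {L l : ℝ}

theorem integrable_exp_mul_sum_sq_sub_one_div_sq (hX : Measurable X)
    (hind : iIndepFun (fun i ω => X ω i) μ) (hL : 1 ≤ L)
    (hint : ∀ i, Integrable (fun ω => exp (X ω i ^ 2 / L ^ 2)) μ)
    (hvar : ∀ i, ∫ ω, X ω i ^ 2 ∂μ = 1) (hl : |l| ≤ 1 / 2) :
    Integrable (fun ω => exp (l * ∑ i, (X ω i ^ 2 - 1) / L ^ 2)) μ := by
  have h := (hind.comp (fun _ x => (x ^ 2 - 1) / L ^ 2) fun _ => by fun_prop)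
    |>.integrable_exp_mul_sum (t := l) (s := Finset.univ) (fun _ => by fun_prop)
    fun i _ => integrable_exp_mul_sq_sub_one_div_sq (by fun_prop) hL (hint i) (hvar i) hl
  simpa [Finset.sum_apply] using h

theorem mgf_sum_sq_sub_one_div_sq_le (hX : Measurable X)
    (hind : iIndepFun (fun i ω => X ω i) μ) (hL : 1 ≤ L)
    (hint : ∀ i, Integrable (fun ω => exp (X ω i ^ 2 / L ^ 2)) μ)
    (hexp : ∀ i, ∫ ω, exp (X ω i ^ 2 / L ^ 2) ∂μ ≤ 2)
    (hvar : ∀ i, ∫ ω, X ω i ^ 2 ∂μ = 1) (hl : |l| ≤ 1 / 2) :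
    mgf (fun ω => ∑ i, (X ω i ^ 2 - 1) / L ^ 2) μ l ≤ exp (44 * m * l ^ 2) := by
  have h := (hind.comp (fun _ x => (x ^ 2 - 1) / L ^ 2) fun _ => by fun_prop).mgf_sum
    (t := l) (fun _ => by fun_prop) Finset.univ
  simp only [Finset.sum_fn, Function.comp_def] at h
  rw [h]
  calc ∏ i, mgf (fun ω => (X ω i ^ 2 - 1) / L ^ 2) μ l ≤ ∏ _i : Fin m, exp (44 * l ^ 2) :=
        Finset.prod_le_prod (fun _ _ => mgf_nonneg) fun i _ =>
          mgf_sq_sub_one_div_sq_le (by fun_prop) hL (hint i) (hexp i) (hvar i) hl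
    _ = exp (44 * m * l ^ 2) := by
        rw [Finset.prod_const, Finset.card_univ, Fintype.card_fin, ← exp_nat_mul]
        ring_nf

theorem measureReal_le_abs_l2norm_sub_sqrt_le (hX : Measurable X)
    (hind : iIndepFun (fun i ω => X ω i) μ) (hL : 1 ≤ L)
    (hint : ∀ i, Integrable (fun ω => exp (X ω i ^ 2 / L ^ 2)) μ)
    (hexp : ∀ i, ∫ ω, exp (X ω i ^ 2 / L ^ 2) ∂μ ≤ 2)
    (hvar : ∀ i, ∫ ω, X ω i ^ 2 ∂μ = 1) {u : ℝ} (hu : 0 < u) :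
    μ.real {ω | u ≤ |l2norm (X ω) - √m|} ≤ 2 * exp (-(u ^ 2 / (14 * L ^ 2) ^ 2)) := by
  rcases Nat.eq_zero_or_pos m with rfl | hm
  · have hempty : {ω | u ≤ |l2norm (X ω) - √((0 : ℕ) : ℝ)|} = ∅ := by
      ext ω
      simp [l2norm, hu.not_ge]
    rw [hempty, measureReal_empty]
    positivity
  set a := u * max u √m / L ^ 2
  have hsub :
      {ω | u ≤ |l2norm (X ω) - √m|} ⊆ {ω | a ≤ |∑ i, (X ω i ^ 2 - 1) / L ^ 2|} := by
    intro ω (hω : u ≤ |l2norm (X ω) - √m|)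
    have h := mul_max_le_abs_sq_sub_sq (l2norm_nonneg _) (sqrt_nonneg _) hω
    rw [l2norm_sq, sq_sqrt (Nat.cast_nonneg m)] at h
    have hsum : ∑ i, (X ω i ^ 2 - 1) / L ^ 2 = (∑ i, X ω i ^ 2 - m) / L ^ 2 := by
      rw [← Finset.sum_div, Finset.sum_sub_distrib]
      simp
    change a ≤ |∑ i, (X ω i ^ 2 - 1) / L ^ 2|
    rw [hsum, abs_div, abs_of_pos (by positivity : (0 : ℝ) < L ^ 2)]
    exact div_le_div_of_nonneg_right h (by positivity)
  calc μ.real {ω | u ≤ |l2norm (X ω) - √m|}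
      ≤ μ.real {ω | a ≤ |∑ i, (X ω i ^ 2 - 1) / L ^ 2|} := measureReal_mono hsub
    _ ≤ 2 * exp (-bernsteinExponent (44 * m) a) :=
        measureReal_abs_ge_le_two_mul_exp_neg_min (by positivity)
          (fun _ hl => integrable_exp_mul_sum_sq_sub_one_div_sq hX hind hL hint hvar hl)
          (fun _ hl => mgf_sum_sq_sub_one_div_sq_le hX hind hL hint hexp hvar hl) (by positivity)
    _ ≤ 2 * exp (-(u ^ 2 / (14 * L ^ 2) ^ 2)) := by
        gcongr
        exact sq_div_le_bernsteinExponent hu hL (Nat.cast_pos.2 hm)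

end IndependentCoordinates

/-- **Concentration of the norm** of a vector with independent sub-gaussian
coordinates of unit second moment. -/
theorem concentration_of_norm :
    ∃ C : ℝ, 0 < C ∧
    ∀ (Ω : Type) [MeasurableSpace Ω] (μ : Measure Ω), IsProbabilityMeasure μ →
      ∀ (m : ℕ) (X : Ω → Fin m → ℝ) (K : ℝ), 1 ≤ K →
        Measurable X →
        iIndepFun (fun i ω => X ω i) μ →
        (∀ i, ∫ ω, X ω i ^ 2 ∂μ = 1) →
        (∀ i, psi2Norm μ (fun ω => X ω i) ≤ K) →
        psi2Norm μ (fun ω => l2norm (X ω) - Real.sqrt m) ≤ C * K ^ 2 := by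
  refine ⟨112, by norm_num, fun Ω _ μ _ m X K hK hX hind hvar hpsi => ?_⟩
  set Z := fun ω => l2norm (X ω) - √m
  have hZ : AEMeasurable Z μ := by fun_prop
  by_cases hZint : ∀ t > 0, Integrable (fun ω => exp (Z ω ^ 2 / t ^ 2)) μ
  · have hXint : ∀ i, ∀ t > 0, Integrable (fun ω => exp (X ω i ^ 2 / t ^ 2)) μ :=
      fun i _ ht => integrable_exp_sq_div_sq_of_sq_le (by fun_prop)
        (fun ω => sq_apply_le_two_mul_sq_l2norm_sub_sqrt_add (X ω) i) hZint ht
    have hXexp : ∀ i, ∫ ω, exp (X ω i ^ 2 / (2 * K) ^ 2) ∂μ ≤ 2 := fun i =>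
      integral_exp_sq_div_sq_le_two_of_psi2Norm_lt (by fun_prop) (hXint i)
        ((hpsi i).trans_lt (by linarith))
    calc psi2Norm μ Z ≤ 2 * (14 * (2 * K) ^ 2) :=
          psi2Norm_le_of_tail hZ (by positivity) fun u hu =>
            measureReal_le_abs_l2norm_sub_sqrt_le hX hind (by linarith)
              (fun i => hXint i _ (by positivity)) hXexp hvar hu
      _ = 112 * K ^ 2 := by ring
  · push Not at hZint
    obtain ⟨t, ht, hnot⟩ := hZint
    rw [psi2Norm_eq_zero_of_not_integrable hZ ht hnot]
    positivity
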